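/- arXiv:math/0305202 — 4 statements merged into one kernel-verified Lean document; each statement's English description precedes it below -/
import Mathlib

section
/- Let ⋆ be a finite type a.b. semistar operation on an integral domain D, let P be a prime ideal of D, and let 𝒱_P be the set of ⋆-valuation overrings of D that contain D_P. Then 𝒱_P is exactly the set of ⋆_P-valuation overrings of D_P, where ⋆_P is the semistar operation on D_P induced by ⋆. -/
open Pointwise

section Preamble

variable (D : Type*) [CommRing D] [IsDomain D]
variable (K : Type*) [Field K] [Algebra D K] [IsFractionRing D K]

/-- The localization `D_P` of `D` at a prime `P`, as a subalgebra of the quotient field. -/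
noncomputable def locAt (P : Ideal D) (hP : P.IsPrime) : Subalgebra D K :=
  Localization.subalgebra K P.primeCompl
    (fun x hx => mem_nonZeroDivisors_of_ne_zero (fun h0 : x = 0 => hx (h0 ▸ P.zero_mem)))

/-- `D_P` as a `D`-submodule of the quotient field. -/
noncomputable def locAtM (P : Ideal D) (hP : P.IsPrime) : Submodule D K :=
  Subalgebra.toSubmodule (locAt D K P hP)

variable {D K}

/-- `E` is finitely generated as a module over the subring corresponding to `Rm`. -/
def IsRFG (Rm E : Submodule D K) : Prop :=
  ∃ F₀ : Submodule D K, F₀.FG ∧ F₀ ≠ ⊥ ∧ E = F₀ * Rm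

/-- `s` is a semistar operation on the subring corresponding to `Rm`
(on `D` itself when `Rm = 1`): it is defined on the nonzero `Rm`-submodules of `K`. -/
def IsSemistar (Rm : Submodule D K) (s : Submodule D K → Submodule D K) : Prop :=
  (∀ E, E ≠ ⊥ → Rm * E ≤ E → Rm * s E ≤ s E) ∧
  (∀ (x : K) (E), x ≠ 0 → E ≠ ⊥ → Rm * E ≤ E → s (x • E) = x • s E) ∧
  (∀ E F, E ≠ ⊥ → F ≠ ⊥ → Rm * E ≤ E → Rm * F ≤ F → E ≤ F → s E ≤ s F) ∧
  (∀ E, E ≠ ⊥ → Rm * E ≤ E → E ≤ s E) ∧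
  (∀ E, E ≠ ⊥ → Rm * E ≤ E → s (s E) = s E)

/-- `s` is of finite type. -/
def IsFiniteType (Rm : Submodule D K) (s : Submodule D K → Submodule D K) : Prop :=
  ∀ E, E ≠ ⊥ → Rm * E ≤ E → s E = sSup {G | ∃ F, IsRFG Rm F ∧ F ≤ E ∧ G = s F}

/-- `s` is a.b. -/
def IsAB (Rm : Submodule D K) (s : Submodule D K → Submodule D K) : Prop :=
  ∀ F G H : Submodule D K, IsRFG Rm F → G ≠ ⊥ → Rm * G ≤ G → H ≠ ⊥ → Rm * H ≤ H →
    s (F * G) ≤ s (F * H) → s G ≤ s H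

/-- `s` is e.a.b. -/
def IsEAB (Rm : Submodule D K) (s : Submodule D K → Submodule D K) : Prop :=
  ∀ F G H : Submodule D K, IsRFG Rm F → IsRFG Rm G → IsRFG Rm H →
    s (F * G) ≤ s (F * H) → s G ≤ s H

/-- `s` is stable. -/
def IsStable (Rm : Submodule D K) (s : Submodule D K → Submodule D K) : Prop :=
  ∀ E F, E ≠ ⊥ → F ≠ ⊥ → Rm * E ≤ E → Rm * F ≤ F → s (E ⊓ F) = s E ⊓ s F

/-- The divisorial closure `E ↦ (R : (R : E))` over the subring corresponding to `Rm`. -/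
def vOp (Rm E : Submodule D K) : Submodule D K := Rm / (Rm / E)

/-- The `t`-operation over the subring corresponding to `Rm`. -/
def tOp (Rm E : Submodule D K) : Submodule D K :=
  sSup {G | ∃ F, IsRFG Rm F ∧ F ≤ E ∧ G = vOp Rm F}

end Preamble

section StarValuation

variable {D K : Type*} [CommRing D] [Field K] [Algebra D K]

theorem IsRFG.ne_bot {M G : Submodule D K} (h1M : 1 ≤ M) (hG : IsRFG M G) : G ≠ ⊥ := by
  obtain ⟨F, -, hF, rfl⟩ := hG
  exact ne_bot_of_le_ne_bot hF (le_mul_of_one_le_right' h1M)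

theorem star_le_mul_of_isFiniteType {s : Submodule D K → Submodule D K}
    (hft : IsFiniteType 1 s) {V : Submodule D K}
    (hV : ∀ F : Submodule D K, F.FG → F ≠ ⊥ → s F ≤ F * V) {E : Submodule D K} (hE : E ≠ ⊥) :
    s E ≤ E * V := by
  rw [hft E hE (by rw [one_mul])]
  refine sSup_le ?_
  rintro _ ⟨_, ⟨F, hFG, hF, rfl⟩, hFE, rfl⟩
  rw [mul_one] at hFE ⊢
  exact (hV F hFG hF).trans (mul_le_mul_left hFE V)

theorem star_le_mul_of_forall_isRFG {s : Submodule D K → Submodule D K}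
    (hs : IsSemistar 1 s) {M V : Submodule D K} (h1M : 1 ≤ M) (hMV : M * V ≤ V)
    (hV : ∀ G : Submodule D K, IsRFG M G → s G ≤ G * V)
    {F : Submodule D K} (hFG : F.FG) (hF : F ≠ ⊥) : s F ≤ F * V := by
  have hFM : IsRFG M (F * M) := ⟨F, hFG, hF, rfl⟩
  calc s F ≤ s (F * M) :=
        hs.2.2.1 F _ hF (hFM.ne_bot h1M) (by rw [one_mul]) (by rw [one_mul])
          (le_mul_of_one_le_right' h1M)
    _ ≤ F * M * V := hV _ hFM
    _ ≤ F * V := by rw [mul_assoc]; exact mul_le_mul_right hMV F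

end StarValuation

theorem one_le_locAtM {D K : Type*} [CommRing D] [IsDomain D] [Field K] [Algebra D K]
    [IsFractionRing D K] (P : Ideal D) (hP : P.IsPrime) : (1 : Submodule D K) ≤ locAtM D K P hP :=
  Submodule.one_le.2 (locAt D K P hP).one_mem

variable {D : Type*} [CommRing D] [IsDomain D]
variable {K : Type*} [Field K] [Algebra D K] [IsFractionRing D K]

theorem stmt6_general (P : Ideal D) (hP : P.IsPrime) (s : Submodule D K → Submodule D K)
    (hs : IsSemistar (1 : Submodule D K) s) (hft : IsFiniteType (1 : Submodule D K) s) :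
    {V : Subalgebra D K | ValuationRing V ∧
        (∀ F : Submodule D K, F.FG → F ≠ ⊥ → s F ≤ F * Subalgebra.toSubmodule V) ∧
        locAt D K P hP ≤ V} =
      {V : Subalgebra D K | locAt D K P hP ≤ V ∧ ValuationRing V ∧
        (∀ G : Submodule D K, IsRFG (locAtM D K P hP) G → s G ≤ G * Subalgebra.toSubmodule V)} := by
  have h1P := one_le_locAtM (K := K) P hP
  ext V
  constructor
  · rintro ⟨hval, hstar, hle⟩
    exact ⟨hle, hval, fun G hG => star_le_mul_of_isFiniteType hft hstar (hG.ne_bot h1P)⟩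
  · rintro ⟨hle, hval, hstar⟩
    have hPV : locAtM D K P hP * Subalgebra.toSubmodule V ≤ Subalgebra.toSubmodule V :=
      (mul_le_mul_left (Subalgebra.toSubmodule.monotone hle) _).trans_eq
        V.isIdempotentElem_toSubmodule
    exact ⟨hval, fun F => star_le_mul_of_forall_isRFG hs h1P hPV hstar, hle⟩

/-- for a finite type a.b. semistar operation `⋆` on `D`, the
`⋆`-valuation overrings of `D` containing `D_P` are exactly the `⋆_P`-valuation
overrings of `D_P`. -/
theorem stmt6 (P : Ideal D) (hP : P.IsPrime) (s : Submodule D K → Submodule D K)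
    (hs : IsSemistar (1 : Submodule D K) s) (hft : IsFiniteType (1 : Submodule D K) s)
    (hab : IsAB (1 : Submodule D K) s) :
    {V : Subalgebra D K | ValuationRing V ∧
        (∀ F : Submodule D K, F.FG → F ≠ ⊥ → s F ≤ F * Subalgebra.toSubmodule V) ∧
        locAt D K P hP ≤ V} =
      {V : Subalgebra D K | locAt D K P hP ≤ V ∧ ValuationRing V ∧
        (∀ G : Submodule D K, IsRFG (locAtM D K P hP) G → s G ≤ G * Subalgebra.toSubmodule V)} :=
  stmt6_general P hP s hs hft
end

section
/- Let D be a v-coherent integral domain. Then for each nonzero finitely generated fractional ideal F of D and each prime ideal P of D, the equality (F D_P)^{v_{D_P}} = F^{v_D} D_P holds, where v_R denotes the divisorial closure operation E ↦ (R : (R : E)) over the ring R. -/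
open Pointwise

variable {D : Type*} [CommRing D] [IsDomain D]
variable {K : Type*} [Field K] [Algebra D K] [IsFractionRing D K]

/-!
Colons by finitely generated modules commute with localization: `S : F = (D : F) S` for
`S = D_P`, by clearing the finitely many denominators of `x F`. If `F⁻¹ = G^v` with `G`
finitely generated, then `G⁻¹ = G^{vvv} = F^v`, and
`(F S)^v = S : F⁻¹ S = S : G^v S = S : G S = G⁻¹ S = F^v S`,
where `S : G^v S = S : G S` holds because `G⁻¹ S` already multiplies `G^v` into `S`.
-/

namespace Submodule

variable {R A : Type*} [CommSemiring R] [CommSemiring A] [Algebra R A]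

theorem div_mul_le (I J : Submodule R A) : I / J * J ≤ I :=
  Submodule.le_div_iff_mul_le.mp le_rfl

theorem div_le_div_left {I J J' : Submodule R A} (h : J ≤ J') : I / J' ≤ I / J :=
  fun _ hx y hy => hx y (h hy)

theorem le_div_div_self (I J : Submodule R A) : J ≤ I / (I / J) :=
  Submodule.le_div_iff_mul_le.mpr (mul_comm J (I / J) ▸ div_mul_le I J)

theorem div_div_div_self (I J : Submodule R A) : I / (I / (I / J)) = I / J :=
  le_antisymm (div_le_div_left (le_div_div_self I J)) (le_div_div_self I (I / J))

theorem mem_div_span_iff {I : Submodule R A} {s : Set A} {x : A} :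
    x ∈ I / span R s ↔ ∀ y ∈ s, x * y ∈ I :=
  span_le (p := I.comap (LinearMap.mulLeft R x))

end Submodule

open Submodule

namespace Subalgebra

variable {R A : Type*} [CommSemiring R] [CommSemiring A] [Algebra R A] (S : Subalgebra R A)

theorem toSubmodule_div_mul_toSubmodule (X : Submodule R A) :
    toSubmodule S / (X * toSubmodule S) = toSubmodule S / X := by
  refine le_antisymm (div_le_div_left ?_) (Submodule.le_div_iff_mul_le.mpr ?_)
  · simpa using mul_le_mul_right (Submodule.one_le.mpr S.one_mem) X
  · calc toSubmodule S / X * (X * toSubmodule S)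
        = toSubmodule S / X * X * toSubmodule S := (mul_assoc _ _ _).symm
      _ ≤ toSubmodule S * toSubmodule S := mul_le_mul_left (div_mul_le _ _) _
      _ = toSubmodule S := S.isIdempotentElem_toSubmodule

theorem toSubmodule_div_eq_of_fg (M : Submonoid R) [IsLocalization M S] {F : Submodule R A}
    (hF : F.FG) :
    toSubmodule S / F = 1 / F * toSubmodule S := by
  refine le_antisymm (fun x hx => ?_) (Submodule.le_div_iff_mul_le.mpr ?_)
  · obtain ⟨T, rfl⟩ := hF
    have hxT : ∀ t : T, x * t ∈ S := fun t => hx t (subset_span t.2)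
    obtain ⟨b, hb⟩ :=
      IsLocalization.exist_integer_multiples M T.attach fun t => (⟨x * t, hxT t⟩ : S)
    have hbx : (b : R) • x ∈ 1 / span R (T : Set A) := mem_div_span_iff.mpr fun t ht => by
      obtain ⟨a, ha⟩ := hb ⟨t, ht⟩ (T.mem_attach _)
      exact mem_one.mpr ⟨a, by rw [smul_mul_assoc]; exact congrArg Subtype.val ha⟩
    obtain ⟨u, hu⟩ := (IsLocalization.map_units S b).exists_left_inv
    have hu' : (u : A) * algebraMap R A b = 1 := congrArg Subtype.val hu
    have hx_eq : x = (b : R) • x * u := by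
      rw [Algebra.smul_def, mul_right_comm, mul_comm _ (u : A), hu', one_mul]
    exact hx_eq ▸ mul_mem_mul hbx u.2
  · calc 1 / F * toSubmodule S * F = 1 / F * F * toSubmodule S := mul_right_comm _ _ _
      _ ≤ 1 * toSubmodule S := mul_le_mul_left (div_mul_le _ _) _
      _ = toSubmodule S := one_mul _

theorem toSubmodule_div_one_div_one_div_of_fg (M : Submonoid R) [IsLocalization M S]
    {G : Submodule R A} (hG : G.FG) :
    toSubmodule S / (1 / (1 / G)) = toSubmodule S / G := by
  refine le_antisymm (div_le_div_left (le_div_div_self 1 G)) ?_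
  rw [S.toSubmodule_div_eq_of_fg M hG, Submodule.le_div_iff_mul_le]
  calc 1 / G * toSubmodule S * (1 / (1 / G))
      = 1 / (1 / G) * (1 / G) * toSubmodule S := by rw [mul_right_comm, mul_comm (1 / G)]
    _ ≤ 1 * toSubmodule S := mul_le_mul_left (div_mul_le _ _) _
    _ = toSubmodule S := one_mul _

theorem toSubmodule_div_div_mul_toSubmodule (M : Submonoid R) [IsLocalization M S]
    {F G : Submodule R A} (hF : F.FG) (hG : G.FG) (hFG : 1 / F = 1 / (1 / G)) :
    toSubmodule S / (toSubmodule S / (F * toSubmodule S)) = 1 / (1 / F) * toSubmodule S := by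
  rw [toSubmodule_div_mul_toSubmodule, S.toSubmodule_div_eq_of_fg M hF,
    toSubmodule_div_mul_toSubmodule, hFG, S.toSubmodule_div_one_div_one_div_of_fg M hG,
    S.toSubmodule_div_eq_of_fg M hG, div_div_div_self]

end Subalgebra

/-- if `D` is `v`-coherent, then `(F D_P)^{v_{D_P}} = F^{v_D} D_P` for every
nonzero finitely generated fractional ideal `F` and every prime `P`. -/
theorem stmt9
    (hcoh : ∀ I : Submodule D K, I.FG → I ≠ ⊥ →
      ∃ F : Submodule D K, F.FG ∧ F ≠ ⊥ ∧ (1 : Submodule D K) / I = vOp 1 F)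
    (F : Submodule D K) (hFG : F.FG) (hF : F ≠ ⊥) (P : Ideal D) (hP : P.IsPrime) :
    vOp (locAtM D K P hP) (F * locAtM D K P hP) = vOp 1 F * locAtM D K P hP := by
  obtain ⟨G, hG, -, hFG_inv⟩ := hcoh F hFG hF
  have : IsLocalization P.primeCompl (locAt D K P hP) :=
    Localization.subalgebra.isLocalization_subalgebra _ _ _
  exact (locAt D K P hP).toSubmodule_div_div_mul_toSubmodule P.primeCompl hFG hG hFG_inv
end

section
/- Let D be an integral domain, Θ a nonempty subset of Spec(D) such that the family {D_P | P ∈ Θ} has finite character (each nonzero x ∈ K is a unit in D_P for all but finitely many P ∈ Θ), and for each P ∈ Θ let *_P be a finite type semistar operation on D_P. Then the semistar operation ∧_Θ on D defined by E^{∧_Θ} := ∩{(E D_P)^{*_P} | P ∈ Θ} is a finite type semistar operation on D. -/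
open Pointwise

variable {D : Type*} [CommRing D] [IsDomain D]
variable {K : Type*} [Field K] [Algebra D K] [IsFractionRing D K]

/-! Each `E ↦ (E D_P)^{*_P}` is a finite type semistar operation on `D`, and an intersection of
semistar operations is again one. For finite type, write `y = e x` with `0 ≠ e ∈ E`. Then
`x ∈ D_P`, hence `y ∈ e D_P`, for all but finitely many `P ∈ Θ`; at each remaining `P`,
finite type of `*_P` provides a finitely generated piece of `E`, and adding these to `D e`
gives a single finitely generated `F ⊆ E` with `y ∈ F^{∧_Θ}`. -/

namespace Submodule

theorem exists_fg_le_of_fg_le_mul {R A : Type*} [CommSemiring R] [Semiring A] [Algebra R A]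
    {E L F : Submodule R A} (hF : F.FG) (h : F ≤ E * L) :
    ∃ E₀ : Submodule R A, E₀.FG ∧ E₀ ≤ E ∧ F ≤ E₀ * L := by
  have hE : E = ⨆ x : E, R ∙ (x : A) := by
    conv_lhs => rw [← E.span_eq, span_eq_iSup_of_singleton_spans]
    exact iSup_subtype'
  rw [hE, iSup_mul] at h
  obtain ⟨t, ht⟩ :=
    CompleteLattice.IsCompactElement.exists_finset_of_le_iSup _ ((fg_iff_compact F).1 hF) _ h
  refine ⟨⨆ x ∈ t, R ∙ (x : A), ?_, iSup₂_le fun x _ => (span_singleton_le_iff_mem _ _).2 x.2, ?_⟩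
  · rw [← Finset.sup_eq_iSup]
    exact fg_finset_sup _ _ fun x _ => fg_span_singleton _
  · simpa only [iSup_mul] using ht

end Submodule

section

variable {R : Type*} [CommRing R] [Algebra R K]

namespace IsSemistar

variable {Rm : Submodule R K} {s : Submodule R K → Submodule R K} {E F : Submodule R K}

theorem mul_apply_le (hs : IsSemistar Rm s) (hE : E ≠ ⊥) (hRE : Rm * E ≤ E) :
    Rm * s E ≤ s E :=
  hs.1 E hE hRE

theorem apply_smul (hs : IsSemistar Rm s) {x : K} (hx : x ≠ 0) (hE : E ≠ ⊥) (hRE : Rm * E ≤ E) :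
    s (x • E) = x • s E :=
  hs.2.1 x E hx hE hRE

theorem apply_mono (hs : IsSemistar Rm s) (hE : E ≠ ⊥) (hRE : Rm * E ≤ E) (hRF : Rm * F ≤ F)
    (hEF : E ≤ F) : s E ≤ s F :=
  hs.2.2.1 E F hE (ne_bot_of_le_ne_bot hE hEF) hRE hRF hEF

theorem le_apply (hs : IsSemistar Rm s) (hE : E ≠ ⊥) (hRE : Rm * E ≤ E) : E ≤ s E :=
  hs.2.2.2.1 E hE hRE

theorem apply_apply (hs : IsSemistar Rm s) (hE : E ≠ ⊥) (hRE : Rm * E ≤ E) : s (s E) = s E :=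
  hs.2.2.2.2 E hE hRE

end IsSemistar

theorem isSemistar_iInf {ι : Type*} {Rm : Submodule R K} (Θ : Set ι)
    {s : ι → Submodule R K → Submodule R K} (hs : ∀ i ∈ Θ, IsSemistar Rm (s i)) :
    IsSemistar Rm (fun E => ⨅ i ∈ Θ, s i E) := by
  have hmul_le : ∀ E, E ≠ ⊥ → Rm * E ≤ E → Rm * ⨅ i ∈ Θ, s i E ≤ ⨅ i ∈ Θ, s i E :=
    fun E hE hRE => le_iInf₂ fun i hi =>
      (mul_le_mul_right (iInf₂_le i hi) Rm).trans ((hs i hi).mul_apply_le hE hRE)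
  have hle : ∀ E, E ≠ ⊥ → Rm * E ≤ E → E ≤ ⨅ i ∈ Θ, s i E :=
    fun E hE hRE => le_iInf₂ fun i hi => (hs i hi).le_apply hE hRE
  refine ⟨hmul_le, fun x E hx hE hRE => ?_, fun E F hE _ hRE hRF hEF => ?_, hle,
    fun E hE hRE => ?_⟩
  · ext y
    simp only [Submodule.mem_smul_iff_inv_mul_mem hx, Submodule.mem_iInf]
    exact forall₂_congr fun i hi => by
      rw [(hs i hi).apply_smul hx hE hRE, Submodule.mem_smul_iff_inv_mul_mem hx]
  · exact iInf₂_mono fun i hi => (hs i hi).apply_mono hE hRE hRF hEF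
  · have hsE := ne_bot_of_le_ne_bot hE (hle E hE hRE)
    refine le_antisymm (le_iInf₂ fun i hi => ?_) (hle _ hsE (hmul_le E hE hRE))
    calc ⨅ j ∈ Θ, s j (⨅ i ∈ Θ, s i E) ≤ s i (⨅ i ∈ Θ, s i E) := iInf₂_le i hi
      _ ≤ s i (s i E) := (hs i hi).apply_mono hsE (hmul_le E hE hRE)
          ((hs i hi).mul_apply_le hE hRE) (iInf₂_le i hi)
      _ = s i E := (hs i hi).apply_apply hE hRE

theorem isRFG_one_iff {F : Submodule R K} : IsRFG 1 F ↔ F.FG ∧ F ≠ ⊥ := by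
  simp [IsRFG]

theorem isFiniteType_one_iff {s : Submodule R K → Submodule R K} (hs : IsSemistar 1 s) :
    IsFiniteType 1 s ↔
      ∀ E : Submodule R K, E ≠ ⊥ → ∀ y ∈ s E, ∃ F, F.FG ∧ F ≠ ⊥ ∧ F ≤ E ∧ y ∈ s F := by
  refine forall₂_congr fun E hE => ?_
  set S := {G | ∃ F, IsRFG 1 F ∧ F ≤ E ∧ G = s F}
  have hE1 : 1 * E ≤ E := (one_mul E).le
  have hdir : DirectedOn (· ≤ ·) S := by
    rintro _ ⟨F₁, hF₁, hF₁E, rfl⟩ _ ⟨F₂, hF₂, hF₂E, rfl⟩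
    obtain ⟨hF₁fg, hF₁0⟩ := isRFG_one_iff.1 hF₁
    obtain ⟨hF₂fg, hF₂0⟩ := isRFG_one_iff.1 hF₂
    have hF0 : F₁ ⊔ F₂ ≠ ⊥ := ne_bot_of_le_ne_bot hF₁0 le_sup_left
    exact ⟨s (F₁ ⊔ F₂), ⟨F₁ ⊔ F₂, isRFG_one_iff.2 ⟨hF₁fg.sup hF₂fg, hF0⟩, sup_le hF₁E hF₂E, rfl⟩,
      hs.apply_mono hF₁0 (one_mul _).le (one_mul _).le le_sup_left,
      hs.apply_mono hF₂0 (one_mul _).le (one_mul _).le le_sup_right⟩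
  have hne : S.Nonempty := by
    obtain ⟨e, he, he0⟩ := (Submodule.ne_bot_iff E).1 hE
    refine ⟨_, R ∙ e, isRFG_one_iff.2 ⟨Submodule.fg_span_singleton e, ?_⟩,
      (Submodule.span_singleton_le_iff_mem e E).2 he, rfl⟩
    exact (Submodule.span_singleton_eq_bot.not).2 he0
  have hsup : sSup S ≤ s E := sSup_le fun _ ⟨F, hF, hFE, hG⟩ =>
    hG ▸ hs.apply_mono (isRFG_one_iff.1 hF).2 (one_mul _).le hE1 hFE
  constructor
  · intro hft y hy
    rw [hft hE1, Submodule.mem_sSup_of_directed hne hdir] at hy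
    obtain ⟨_, ⟨F, hF, hFE, rfl⟩, hyF⟩ := hy
    exact ⟨F, (isRFG_one_iff.1 hF).1, (isRFG_one_iff.1 hF).2, hFE, hyF⟩
  · intro h _
    refine le_antisymm (fun y hy => ?_) hsup
    obtain ⟨F, hFfg, hF0, hFE, hyF⟩ := h y hy
    exact le_sSup (show s F ∈ S from ⟨F, isRFG_one_iff.2 ⟨hFfg, hF0⟩, hFE, rfl⟩) hyF

namespace Subalgebra

variable (A : Subalgebra R K) {E : Submodule R K}

theorem toSubmodule_ne_bot : A.toSubmodule ≠ ⊥ :=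
  (Submodule.ne_bot_iff _).2 ⟨1, A.one_mem, one_ne_zero⟩

theorem mul_toSubmodule_ne_bot (hE : E ≠ ⊥) : E * A.toSubmodule ≠ ⊥ := by
  rw [Ne, Submodule.mul_eq_bot, not_or]
  exact ⟨hE, A.toSubmodule_ne_bot⟩

theorem le_mul_toSubmodule : E ≤ E * A.toSubmodule :=
  le_mul_of_one_le_right' (Submodule.one_le.2 A.one_mem)

theorem toSubmodule_mul_mul_toSubmodule :
    A.toSubmodule * (E * A.toSubmodule) = E * A.toSubmodule := by
  rw [mul_left_comm, A.isIdempotentElem_toSubmodule.eq]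

theorem mul_toSubmodule_mul_toSubmodule :
    E * A.toSubmodule * A.toSubmodule = E * A.toSubmodule := by
  rw [mul_assoc, A.isIdempotentElem_toSubmodule.eq]

theorem mul_toSubmodule_eq_self (h : A.toSubmodule * E ≤ E) : E * A.toSubmodule = E :=
  le_antisymm (by rwa [mul_comm]) A.le_mul_toSubmodule

end Subalgebra

variable {A : Subalgebra R K} {s : Submodule R K → Submodule R K}

theorem IsSemistar.comp_mul_toSubmodule (hs : IsSemistar A.toSubmodule s) :
    IsSemistar 1 (fun E => s (E * A.toSubmodule)) := by
  refine ⟨fun E _ _ => (one_mul _).le, fun x E hx hE _ => ?_, fun E F hE _ _ _ hEF => ?_,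
    fun E hE _ => ?_, fun E hE _ => ?_⟩
  · dsimp only
    rw [smul_mul_assoc, hs.apply_smul hx (A.mul_toSubmodule_ne_bot hE)
      A.toSubmodule_mul_mul_toSubmodule.le]
  · exact hs.apply_mono (A.mul_toSubmodule_ne_bot hE) A.toSubmodule_mul_mul_toSubmodule.le
      A.toSubmodule_mul_mul_toSubmodule.le (mul_le_mul_left hEF _)
  · exact A.le_mul_toSubmodule.trans
      (hs.le_apply (A.mul_toSubmodule_ne_bot hE) A.toSubmodule_mul_mul_toSubmodule.le)
  · have hEA := A.mul_toSubmodule_ne_bot hE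
    have hstable := A.toSubmodule_mul_mul_toSubmodule (E := E)
    dsimp only
    rw [A.mul_toSubmodule_eq_self (hs.mul_apply_le hEA hstable.le), hs.apply_apply hEA hstable.le]

theorem IsSemistar.mul_mem_apply_mul_toSubmodule (hs : IsSemistar A.toSubmodule s)
    {E : Submodule R K} (hE : E ≠ ⊥) {e x : K} (he : e ∈ E) (hx : x ∈ A) :
    e * x ∈ s (E * A.toSubmodule) :=
  hs.le_apply (A.mul_toSubmodule_ne_bot hE) A.toSubmodule_mul_mul_toSubmodule.le
    (Submodule.mul_mem_mul he hx)

theorem IsFiniteType.comp_mul_toSubmodule (hs : IsSemistar A.toSubmodule s)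
    (hft : IsFiniteType A.toSubmodule s) : IsFiniteType 1 (fun E => s (E * A.toSubmodule)) := by
  intro E hE _
  refine le_antisymm ?_ (sSup_le ?_)
  · dsimp only
    rw [hft _ (A.mul_toSubmodule_ne_bot hE) A.toSubmodule_mul_mul_toSubmodule.le]
    refine sSup_le ?_
    rintro _ ⟨_, ⟨F₀, hF₀, hF₀0, rfl⟩, hF₀E, rfl⟩
    obtain ⟨E₀, hE₀, hE₀E, hF₀E₀⟩ :=
      Submodule.exists_fg_le_of_fg_le_mul hF₀ (A.le_mul_toSubmodule.trans hF₀E)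
    have hE₀0 : E₀ ≠ ⊥ := by
      rintro rfl
      exact hF₀0 (le_bot_iff.1 (by simpa using hF₀E₀))
    have hF₀A : F₀ * A.toSubmodule ≤ E₀ * A.toSubmodule := by
      simpa only [A.mul_toSubmodule_mul_toSubmodule] using mul_le_mul_left hF₀E₀ A.toSubmodule
    exact le_sSup_of_le ⟨E₀, isRFG_one_iff.2 ⟨hE₀, hE₀0⟩, hE₀E, rfl⟩
      (hs.apply_mono (A.mul_toSubmodule_ne_bot hF₀0) A.toSubmodule_mul_mul_toSubmodule.le
        A.toSubmodule_mul_mul_toSubmodule.le hF₀A)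
  · rintro _ ⟨F, hF, hFE, rfl⟩
    exact hs.apply_mono (A.mul_toSubmodule_ne_bot (isRFG_one_iff.1 hF).2)
      A.toSubmodule_mul_mul_toSubmodule.le A.toSubmodule_mul_mul_toSubmodule.le
      (mul_le_mul_left hFE _)

theorem isFiniteType_iInf_comp_mul_toSubmodule {ι : Type*} (A : ι → Subalgebra R K) (Θ : Set ι)
    (hfc : ∀ x : K, x ≠ 0 → {i ∈ Θ | x ∉ A i}.Finite) {s : ι → Submodule R K → Submodule R K}
    (hsemi : ∀ i ∈ Θ, IsSemistar (A i).toSubmodule (s i))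
    (hft : ∀ i ∈ Θ, IsFiniteType (A i).toSubmodule (s i)) :
    IsFiniteType 1 (fun E => ⨅ i ∈ Θ, s i (E * (A i).toSubmodule)) := by
  have hsemi₁ := fun i hi => (hsemi i hi).comp_mul_toSubmodule
  have hft₁ := fun i hi =>
    (isFiniteType_one_iff (hsemi₁ i hi)).1 ((hft i hi).comp_mul_toSubmodule (hsemi i hi))
  rw [isFiniteType_one_iff (isSemistar_iInf Θ hsemi₁)]
  intro E hE y hy
  simp only [Submodule.mem_iInf] at hy
  obtain ⟨e, he, he0⟩ := (Submodule.ne_bot_iff E).1 hE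
  set x := e⁻¹ * y
  have hxy : e * x = y := mul_inv_cancel_left₀ he0 y
  have hbad : {i ∈ Θ | x ∉ A i}.Finite := by
    rcases eq_or_ne x 0 with hx | hx
    · simp [hx]
    · exact hfc x hx
  have hfg : ∀ i ∈ {i ∈ Θ | x ∉ A i},
      ∃ F, F.FG ∧ F ≠ ⊥ ∧ F ≤ E ∧ y ∈ s i (F * (A i).toSubmodule) :=
    fun i hi => hft₁ i hi.1 E hE y (hy i hi.1)
  choose! F hFfg hF0 hFE hyF using hfg
  have heG : R ∙ e ≤ R ∙ e ⊔ hbad.toFinset.sup F := le_sup_left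
  have hG0 : R ∙ e ⊔ hbad.toFinset.sup F ≠ ⊥ :=
    ne_bot_of_le_ne_bot (Submodule.span_singleton_eq_bot.not.2 he0) heG
  refine ⟨R ∙ e ⊔ hbad.toFinset.sup F,
    (Submodule.fg_span_singleton e).sup
      (Submodule.fg_finset_sup _ _ fun i hi => hFfg i (hbad.mem_toFinset.1 hi)), hG0,
    sup_le ((Submodule.span_singleton_le_iff_mem e E).2 he)
      (Finset.sup_le fun i hi => hFE i (hbad.mem_toFinset.1 hi)), ?_⟩
  simp only [Submodule.mem_iInf]
  intro i hi
  by_cases hxi : x ∈ A i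
  · exact hxy ▸ (hsemi i hi).mul_mem_apply_mul_toSubmodule hG0
      (heG (Submodule.mem_span_singleton_self e)) hxi
  · have hFG : F i ≤ R ∙ e ⊔ hbad.toFinset.sup F :=
      le_sup_right.trans' (Finset.le_sup (hbad.mem_toFinset.2 ⟨hi, hxi⟩))
    exact (hsemi₁ i hi).apply_mono (hF0 i ⟨hi, hxi⟩) (one_mul _).le (one_mul _).le hFG
      (hyF i ⟨hi, hxi⟩)

end

theorem stmt13_general (Θ : Set (PrimeSpectrum D))
    (hfc : ∀ x : K, x ≠ 0 →
      {P ∈ Θ | ¬ (x ∈ locAt D K P.asIdeal P.isPrime ∧ x⁻¹ ∈ locAt D K P.asIdeal P.isPrime)}.Finite)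
    (star : PrimeSpectrum D → Submodule D K → Submodule D K)
    (hsemi : ∀ P ∈ Θ, IsSemistar (locAtM D K P.asIdeal P.isPrime) (star P))
    (hft : ∀ P ∈ Θ, IsFiniteType (locAtM D K P.asIdeal P.isPrime) (star P)) :
    IsSemistar (1 : Submodule D K)
        (fun E => ⨅ P ∈ Θ, star P (E * locAtM D K P.asIdeal P.isPrime)) ∧
      IsFiniteType (1 : Submodule D K)
        (fun E => ⨅ P ∈ Θ, star P (E * locAtM D K P.asIdeal P.isPrime)) := by
  let A : PrimeSpectrum D → Subalgebra D K := fun P => locAt D K P.asIdeal P.isPrime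
  have hfc' : ∀ x : K, x ≠ 0 → {P ∈ Θ | x ∉ A P}.Finite :=
    fun x hx => (hfc x hx).subset fun P hP => ⟨hP.1, fun h => hP.2 h.1⟩
  exact ⟨isSemistar_iInf Θ fun P hP => IsSemistar.comp_mul_toSubmodule (A := A P) (hsemi P hP),
    isFiniteType_iInf_comp_mul_toSubmodule A Θ hfc' hsemi hft⟩

/-- if the family `{D_P | P ∈ Θ}` has finite character and each `*_P` is a
finite type semistar operation on `D_P`, then `∧_Θ : E ↦ ∩ {(E D_P)^{*_P} | P ∈ Θ}` is a
finite type semistar operation on `D`. -/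
theorem stmt13 (Θ : Set (PrimeSpectrum D)) (hne : Θ.Nonempty)
    (hfc : ∀ x : K, x ≠ 0 →
      {P ∈ Θ | ¬ (x ∈ locAt D K P.asIdeal P.isPrime ∧ x⁻¹ ∈ locAt D K P.asIdeal P.isPrime)}.Finite)
    (star : PrimeSpectrum D → Submodule D K → Submodule D K)
    (hsemi : ∀ P ∈ Θ, IsSemistar (locAtM D K P.asIdeal P.isPrime) (star P))
    (hft : ∀ P ∈ Θ, IsFiniteType (locAtM D K P.asIdeal P.isPrime) (star P)) :
    IsSemistar (1 : Submodule D K)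
        (fun E => ⨅ P ∈ Θ, star P (E * locAtM D K P.asIdeal P.isPrime)) ∧
      IsFiniteType (1 : Submodule D K)
        (fun E => ⨅ P ∈ Θ, star P (E * locAtM D K P.asIdeal P.isPrime)) :=
  stmt13_general Θ hfc star hsemi hft
end

section
/- Let D be an integral domain and ⋆ a spectral semistar operation defined by a set Δ of primes with D_P a valuation domain for every P ∈ Δ. If (aD ∩ bD)^⋆ is of ⋆-finite type for all nonzero a, b ∈ D, then every finite intersection a₁D ∩ a₂D ∩ … ∩ a_tD of nonzero principal ideals of D is of ⋆-finite type. -/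
open Pointwise

/-! Stability of `⋆` gives `(J ∩ yD)^⋆ = (F ∩ yD)^⋆` whenever `J^⋆ = F^⋆`, so by induction on the
number of principal ideals it suffices to show that `(F ∩ yD)^⋆` is of `⋆`-finite type for every
finitely generated `F = x₁D + ⋯ + xₙD`. As each `D_P` is a valuation domain, `F D_P = x_j D_P` for
one of the generators, whence `(F ∩ yD)^⋆ = (Σᵢ (xᵢD ∩ yD))^⋆`; after clearing denominators each
`(xᵢD ∩ yD)^⋆` is of `⋆`-finite type by the two-element hypothesis. -/

open Submodule

variable {D : Type*} [CommRing D] [IsDomain D]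
variable {K : Type*} [Field K] [Algebra D K] [IsFractionRing D K]

section SpanSingletonMul

variable {R A : Type*} [CommSemiring R] [Field A] [Algebra R A] {u : A}

lemma span_singleton_mul_eq_comap (hu : u ≠ 0) (E : Submodule R A) :
    span R {u} * E = E.comap (LinearMap.mulLeft R u⁻¹) := by
  ext x
  rw [mem_span_singleton_mul, mem_comap, LinearMap.mulLeft_apply]
  constructor
  · rintro ⟨z, hz, rfl⟩
    rwa [inv_mul_cancel_left₀ hu]
  · intro hx
    exact ⟨u⁻¹ * x, hx, mul_inv_cancel_left₀ hu x⟩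

lemma span_singleton_mul_inf (hu : u ≠ 0) (E F : Submodule R A) :
    span R {u} * (E ⊓ F) = span R {u} * E ⊓ span R {u} * F := by
  simp only [span_singleton_mul_eq_comap hu, comap_inf]

lemma span_singleton_mul_iInf (hu : u ≠ 0) {ι : Sort*} (E : ι → Submodule R A) :
    span R {u} * ⨅ i, E i = ⨅ i, span R {u} * E i := by
  simp only [span_singleton_mul_eq_comap hu, comap_iInf]

end SpanSingletonMul

section Localization

variable {P : Ideal D} {hP : P.IsPrime}

lemma one_le_locAtM_s19 : (1 : Submodule D K) ≤ locAtM D K P hP :=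
  Submodule.one_le.2 (one_mem (locAt D K P hP))

lemma locAtM_mul_self : locAtM D K P hP * locAtM D K P hP = locAtM D K P hP :=
  (Subalgebra.isIdempotentElem_toSubmodule _).eq

lemma mul_locAtM_le_of_le {E F : Submodule D K} (h : E ≤ F * locAtM D K P hP) :
    E * locAtM D K P hP ≤ F * locAtM D K P hP :=
  calc E * locAtM D K P hP ≤ F * locAtM D K P hP * locAtM D K P hP := mul_le_mul' h le_rfl
    _ = F * locAtM D K P hP := by rw [mul_assoc, locAtM_mul_self]

lemma mem_mul_locAtM {E : Submodule D K} {x : K} :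
    x ∈ E * locAtM D K P hP ↔ ∃ s ∉ P, s • x ∈ E := by
  have ne_zero {s : D} (hs : s ∉ P) : algebraMap D K s ≠ 0 :=
    IsFractionRing.to_map_eq_zero_iff.not.2 fun h => hs (h ▸ P.zero_mem)
  constructor
  · intro hx
    refine Submodule.mul_induction_on hx ?_ ?_
    · rintro m hm _ ⟨a, s, hs, rfl⟩
      refine ⟨s, hs, ?_⟩
      rw [Algebra.smul_def, mul_left_comm, IsFractionRing.mk'_eq_div,
        mul_div_cancel₀ _ (ne_zero hs), mul_comm, ← Algebra.smul_def]
      exact E.smul_mem a hm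
    · rintro y z ⟨s, hs, hy⟩ ⟨t, ht, hz⟩
      refine ⟨s * t, fun hst => (hP.mem_or_mem hst).elim hs ht, ?_⟩
      rw [smul_add, mul_comm, mul_smul, mul_comm, mul_smul]
      exact add_mem (E.smul_mem t hy) (E.smul_mem s hz)
  · rintro ⟨s, hs, hx⟩
    have hinv : (algebraMap D K s)⁻¹ ∈ locAtM D K P hP :=
      ⟨1, s, hs, by rw [IsFractionRing.mk'_eq_div, map_one, one_div]⟩
    convert mul_mem_mul hx hinv using 1
    rw [Algebra.smul_def, mul_comm, ← mul_assoc, inv_mul_cancel₀ (ne_zero hs), one_mul]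

lemma inf_mul_locAtM (E F : Submodule D K) :
    (E ⊓ F) * locAtM D K P hP = E * locAtM D K P hP ⊓ F * locAtM D K P hP := by
  refine le_antisymm (le_inf (mul_le_mul' inf_le_left le_rfl) (mul_le_mul' inf_le_right le_rfl)) ?_
  rintro x ⟨hE, hF⟩
  obtain ⟨s, hs, hsx⟩ := mem_mul_locAtM.1 hE
  obtain ⟨t, ht, htx⟩ := mem_mul_locAtM.1 hF
  refine mem_mul_locAtM.2 ⟨t * s, fun h => (hP.mem_or_mem h).elim ht hs, ?_, ?_⟩
  · rw [mul_smul]; exact E.smul_mem t hsx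
  · rw [mul_comm, mul_smul]; exact F.smul_mem s htx

lemma span_singleton_mul_locAtM_total (hv : ValuationRing (locAt D K P hP)) (x y : K) :
    span D {x} * locAtM D K P hP ≤ span D {y} * locAtM D K P hP ∨
      span D {y} * locAtM D K P hP ≤ span D {x} * locAtM D K P hP := by
  have le_of_isInteger : ∀ {x y : K}, IsLocalization.IsInteger (locAt D K P hP) (x / y) → y ≠ 0 →
      span D {x} * locAtM D K P hP ≤ span D {y} * locAtM D K P hP := by
    rintro x y ⟨z, hz⟩ hy
    refine mul_locAtM_le_of_le (span_le.2 (Set.singleton_subset_iff.2 ?_))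
    rw [← div_mul_cancel₀ x hy, ← hz, mul_comm (algebraMap _ K z)]
    exact mul_mem_mul (mem_span_singleton_self y) z.2
  rcases eq_or_ne y 0 with rfl | hy
  · right; simp
  rcases eq_or_ne x 0 with rfl | hx
  · left; simp
  rcases ValuationRing.isInteger_or_isInteger (locAt D K P hP) (x / y) with h | h
  · exact Or.inl (le_of_isInteger h hy)
  · rw [inv_div] at h
    exact Or.inr (le_of_isInteger h hx)

lemma exists_mem_span_mul_locAtM_le (hv : ValuationRing (locAt D K P hP)) {s : Finset K}
    (hs : s.Nonempty) : ∃ x ∈ s, span D s * locAtM D K P hP ≤ span D {x} * locAtM D K P hP := by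
  induction hs using Finset.Nonempty.cons_induction with
  | singleton a => exact ⟨a, Finset.mem_singleton_self a, by rw [Finset.coe_singleton]⟩
  | cons a s ha _ ih =>
    obtain ⟨x, hx, hsx⟩ := ih
    rw [Finset.coe_cons, span_insert, Submodule.sup_mul]
    rcases span_singleton_mul_locAtM_total hv a x with hax | hxa
    · exact ⟨x, Finset.mem_cons_of_mem hx, sup_le hax hsx⟩
    · exact ⟨a, Finset.mem_cons_self a s, sup_le le_rfl (hsx.trans hxa)⟩

end Localization

noncomputable def spectralStar (Δ : Set (PrimeSpectrum D)) (E : Submodule D K) : Submodule D K :=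
  ⨅ P ∈ Δ, E * locAtM D K P.asIdeal P.isPrime

/-- Unlike in the paper, `F = ⊥` is allowed, so that intersections with `0D = ⊥` need no separate
treatment; a nonzero `F` is recovered by `IsStarFiniteType.exists_fg_ne_bot`. -/
def IsStarFiniteType (Δ : Set (PrimeSpectrum D)) (E : Submodule D K) : Prop :=
  ∃ F : Submodule D K, F.FG ∧ spectralStar Δ E = spectralStar Δ F

section SpectralStar

variable {Δ : Set (PrimeSpectrum D)} {E F : Submodule D K}

lemma spectralStar_mono (h : E ≤ F) : spectralStar Δ E ≤ spectralStar Δ F :=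
  iInf₂_mono fun _ _ => mul_le_mul' h le_rfl

lemma le_spectralStar : E ≤ spectralStar Δ E :=
  le_iInf₂ fun _ _ => le_mul_of_one_le_right' one_le_locAtM_s19

lemma spectralStar_le_spectralStar (h : E ≤ spectralStar Δ F) :
    spectralStar Δ E ≤ spectralStar Δ F :=
  le_iInf₂ fun P hP => (iInf₂_le P hP).trans (mul_locAtM_le_of_le (h.trans (iInf₂_le P hP)))

lemma spectralStar_inf : spectralStar Δ (E ⊓ F) = spectralStar Δ E ⊓ spectralStar Δ F := by
  simp only [spectralStar, inf_mul_locAtM, iInf_inf_eq]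

lemma spectralStar_span_singleton_mul {u : K} (hu : u ≠ 0) :
    spectralStar Δ (span D {u} * E) = span D {u} * spectralStar Δ E := by
  simp only [spectralStar, span_singleton_mul_iInf hu, mul_assoc]

lemma spectralStar_span_inf_span_singleton
    (hval : ∀ P ∈ Δ, ValuationRing (locAt D K P.asIdeal P.isPrime)) (s : Finset K) (y : K) :
    spectralStar Δ (span D s ⊓ span D {y}) =
      spectralStar Δ (⨆ x ∈ s, span D {x} ⊓ span D {y}) := by
  refine le_antisymm (iInf₂_mono fun P hP => ?_) (spectralStar_mono (iSup₂_le fun x hx =>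
    inf_le_inf_right _ (span_mono (Set.singleton_subset_iff.2 hx))))
  rcases s.eq_empty_or_nonempty with rfl | hs
  · simp
  obtain ⟨x, hx, hsx⟩ := exists_mem_span_mul_locAtM_le (hval P hP) hs
  calc (span D s ⊓ span D {y}) * locAtM D K P.asIdeal P.isPrime
      ≤ (span D {x} ⊓ span D {y}) * locAtM D K P.asIdeal P.isPrime := by
        rw [inf_mul_locAtM, inf_mul_locAtM]
        exact inf_le_inf_right _ hsx
    _ ≤ (⨆ x ∈ s, span D {x} ⊓ span D {y}) * locAtM D K P.asIdeal P.isPrime :=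
        mul_le_mul' (le_iSup₂ (f := fun x _ => span D {x} ⊓ span D {y}) x hx) le_rfl

namespace IsStarFiniteType

lemma of_fg (hE : E.FG) : IsStarFiniteType Δ E :=
  ⟨E, hE, rfl⟩

lemma of_spectralStar_eq (h : spectralStar Δ E = spectralStar Δ F) (hF : IsStarFiniteType Δ F) :
    IsStarFiniteType Δ E :=
  hF.imp fun _ hG => ⟨hG.1, h.trans hG.2⟩

lemma span_singleton_mul {u : K} (hu : u ≠ 0) (hE : IsStarFiniteType Δ E) :
    IsStarFiniteType Δ (span D {u} * E) := by
  obtain ⟨F, hF, hEF⟩ := hE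
  exact ⟨span D {u} * F, (fg_span_singleton u).mul hF, by
    rw [spectralStar_span_singleton_mul hu, hEF, spectralStar_span_singleton_mul hu]⟩

lemma biSup {ι : Type*} (s : Finset ι) {E : ι → Submodule D K}
    (hE : ∀ i ∈ s, IsStarFiniteType Δ (E i)) : IsStarFiniteType Δ (⨆ i ∈ s, E i) := by
  choose! F hFfg hF using hE
  have le_of_eqOn : ∀ G H : ι → Submodule D K,
      (∀ i ∈ s, spectralStar Δ (G i) = spectralStar Δ (H i)) →
        spectralStar Δ (⨆ i ∈ s, G i) ≤ spectralStar Δ (⨆ i ∈ s, H i) := fun G H hGH =>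
    spectralStar_le_spectralStar <| iSup₂_le fun i hi => le_spectralStar.trans <|
      (hGH i hi).le.trans (spectralStar_mono (le_iSup₂ (f := fun i _ => H i) i hi))
  exact ⟨⨆ i ∈ s, F i, fg_biSup s F hFfg,
    le_antisymm (le_of_eqOn E F hF) (le_of_eqOn F E fun i hi => (hF i hi).symm)⟩

lemma exists_fg_ne_bot (hE : IsStarFiniteType Δ E) (hE0 : E ≠ ⊥) :
    ∃ F : Submodule D K, F.FG ∧ F ≠ ⊥ ∧ spectralStar Δ E = spectralStar Δ F := by
  obtain ⟨F, hF, hEF⟩ := hE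
  obtain ⟨x, hx, hx0⟩ := (Submodule.ne_bot_iff E).1 hE0
  refine ⟨F ⊔ span D {x}, hF.sup (fg_span_singleton x),
    (Submodule.ne_bot_iff _).2 ⟨x, mem_sup_right (mem_span_singleton_self x), hx0⟩,
    le_antisymm (hEF ▸ spectralStar_mono le_sup_left) (spectralStar_le_spectralStar ?_)⟩
  exact sup_le (hEF ▸ le_spectralStar) (span_le.2 (Set.singleton_subset_iff.2 (le_spectralStar hx)))

end IsStarFiniteType

end SpectralStar

section FiniteIntersections

variable {Δ : Set (PrimeSpectrum D)}

lemma isStarFiniteType_span_singleton_inf_span_singleton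
    (h : ∀ a b : D, a ≠ 0 → b ≠ 0 →
      IsStarFiniteType Δ (span D {algebraMap D K a} ⊓ span D {algebraMap D K b}))
    (x y : K) : IsStarFiniteType Δ (span D {x} ⊓ span D {y}) := by
  rcases eq_or_ne x 0 with rfl | hx
  · simpa using IsStarFiniteType.of_fg (Δ := Δ) (fg_bot (R := D) (M := K))
  rcases eq_or_ne y 0 with rfl | hy
  · simpa using IsStarFiniteType.of_fg (Δ := Δ) (fg_bot (R := D) (M := K))
  obtain ⟨a, d, hd, rfl⟩ := IsFractionRing.div_surjective (A := D) x
  obtain ⟨b, e, he, rfl⟩ := IsFractionRing.div_surjective (A := D) y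
  have hd0 := IsFractionRing.to_map_ne_zero_of_mem_nonZeroDivisors (K := K) hd
  have he0 := IsFractionRing.to_map_ne_zero_of_mem_nonZeroDivisors (K := K) he
  have ha0 : a ≠ 0 := by rintro rfl; simp at hx
  have hb0 : b ≠ 0 := by rintro rfl; simp at hy
  set u := algebraMap D K (d * e)
  have hu : u ≠ 0 := by simp [u, hd0, he0]
  have hscale :
      span D {u⁻¹} * (span D {algebraMap D K (a * e)} ⊓ span D {algebraMap D K (b * d)}) =
        span D {algebraMap D K a / algebraMap D K d} ⊓
          span D {algebraMap D K b / algebraMap D K e} := by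
    rw [span_singleton_mul_inf (inv_ne_zero hu), span_mul_span, span_mul_span,
      Set.singleton_mul_singleton, Set.singleton_mul_singleton]
    congr 3 <;> simp only [u, map_mul] <;> field_simp
  exact hscale ▸ (h _ _ (mul_ne_zero ha0 (nonZeroDivisors.ne_zero he))
    (mul_ne_zero hb0 (nonZeroDivisors.ne_zero hd))).span_singleton_mul (inv_ne_zero hu)

lemma IsStarFiniteType.inf_span_singleton
    (hval : ∀ P ∈ Δ, ValuationRing (locAt D K P.asIdeal P.isPrime))
    (h : ∀ x y : K, IsStarFiniteType Δ (span D {x} ⊓ span D {y}))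
    {E : Submodule D K} (hE : IsStarFiniteType Δ E) (y : K) :
    IsStarFiniteType Δ (E ⊓ span D {y}) := by
  obtain ⟨_, ⟨s, rfl⟩, hE⟩ := hE
  refine .of_spectralStar_eq ?_ (.biSup s fun x _ => h x y)
  rw [spectralStar_inf, hE, ← spectralStar_inf, spectralStar_span_inf_span_singleton hval]

lemma isStarFiniteType_biInf_span_singleton
    (hval : ∀ P ∈ Δ, ValuationRing (locAt D K P.asIdeal P.isPrime))
    (h : ∀ x y : K, IsStarFiniteType Δ (span D {x} ⊓ span D {y}))
    {ι : Type*} (x : ι → K) {s : Finset ι} (hs : s.Nonempty) :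
    IsStarFiniteType Δ (⨅ i ∈ s, span D {x i}) := by
  classical
  induction hs using Finset.Nonempty.cons_induction with
  | singleton i => simpa using IsStarFiniteType.of_fg (fg_span_singleton (x i))
  | cons i s hi _ ih =>
    rw [Finset.cons_eq_insert, Finset.iInf_insert, inf_comm]
    exact ih.inf_span_singleton hval h (x i)

end FiniteIntersections

lemma iInf_span_algebraMap_ne_bot {ι : Type*} [Fintype ι] (a : ι → D) (ha : ∀ i, a i ≠ 0) :
    (⨅ i, span D {algebraMap D K (a i)}) ≠ ⊥ := by
  classical
  refine (Submodule.ne_bot_iff _).2 ⟨algebraMap D K (∏ i, a i), mem_iInf _ |>.2 fun i => ?_, ?_⟩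
  · refine mem_span_singleton.2 ⟨∏ j ∈ Finset.univ.erase i, a j, ?_⟩
    rw [Algebra.smul_def, ← map_mul, Finset.prod_erase_mul _ _ (Finset.mem_univ i)]
  · exact IsFractionRing.to_map_eq_zero_iff.not.2 (Finset.prod_ne_zero_iff.2 fun i _ => ha i)

/-- under the hypotheses of Statement 17, every finite intersection
`a₁D ∩ … ∩ a_tD` of nonzero principal ideals is of `⋆`-finite type. -/
theorem stmt19 (Δ : Set (PrimeSpectrum D))
    (hval : ∀ P ∈ Δ, ValuationRing (locAt D K P.asIdeal P.isPrime))
    (h : ∀ a b : D, a ≠ 0 → b ≠ 0 → ∃ F : Submodule D K, F.FG ∧ F ≠ ⊥ ∧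
      (⨅ P ∈ Δ, (Submodule.span D {algebraMap D K a} ⊓ Submodule.span D {algebraMap D K b}) *
          locAtM D K P.asIdeal P.isPrime) =
        ⨅ P ∈ Δ, F * locAtM D K P.asIdeal P.isPrime) :
    ∀ (t : ℕ), 0 < t → ∀ a : Fin t → D, (∀ i, a i ≠ 0) →
      ∃ F : Submodule D K, F.FG ∧ F ≠ ⊥ ∧
        (⨅ P ∈ Δ, (⨅ i, Submodule.span D {algebraMap D K (a i)}) *
            locAtM D K P.asIdeal P.isPrime) =
          ⨅ P ∈ Δ, F * locAtM D K P.asIdeal P.isPrime := by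
  intro t ht a ha
  have h₂ : ∀ x y : K, IsStarFiniteType Δ (span D {x} ⊓ span D {y}) :=
    isStarFiniteType_span_singleton_inf_span_singleton fun a b ha hb =>
      (h a b ha hb).imp fun _ hF => ⟨hF.1, hF.2.2⟩
  have hfin := isStarFiniteType_biInf_span_singleton hval h₂ (fun i => algebraMap D K (a i))
    (Finset.univ_nonempty_iff.2 (Fin.pos_iff_nonempty.1 ht))
  simp only [Finset.mem_univ, iInf_pos] at hfin
  exact hfin.exists_fg_ne_bot (iInf_span_algebraMap_ne_bot a ha)
end
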